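/- arXiv:2306.11708 — 3 statements merged into one kernel-verified Lean document; each statement's English description precedes it below -/
import Mathlib

section
/- Let K be a nonempty compact convex subset of ℝ^n. Then K equals the closure of the convex hull of its exposed points (Straszewicz's theorem). -/
/-!
If `z ∈ K` lay outside `C = closure (convexHull (exposedPoints K))`, a functional `l = ⟪u, ·⟫`
would separate `z` from `C`. A point `p` of `K` farthest from `q = z - t • u` is exposed (by
`⟪p - q, ·⟫`), and expanding `‖p - q‖² ≥ ‖z - q‖²` gives `l p ≥ l z - ‖p - z‖² / (2t)`; for `t`
large this puts `p` beyond the separating hyperplane, outside `C`. No Krein–Milman is needed.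
-/

open Metric InnerProductSpace RealInnerProductSpace

variable {E : Type*} [NormedAddCommGroup E] [InnerProductSpace ℝ E] {K : Set E}

theorem mem_exposedPoints_of_isMaxOn_dist {p q : E} (hp : p ∈ K)
    (hmax : IsMaxOn (fun y => dist y q) K p) : p ∈ K.exposedPoints ℝ := by
  refine ⟨hp, innerSL ℝ (p - q), fun y hy => ?_⟩
  have hfar : ‖y - q‖ ^ 2 ≤ ‖p - q‖ ^ 2 := by
    simpa only [dist_eq_norm] using pow_le_pow_left₀ dist_nonneg (hmax hy) 2
  have hexpand : ‖y - q‖ ^ 2 = ‖p - q‖ ^ 2 + 2 * ⟪p - q, y - p⟫ + ‖y - p‖ ^ 2 := by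
    rw [← norm_add_sq_real, sub_add_sub_cancel']
  simp only [innerSL_apply_apply]
  rw [inner_sub_right] at hexpand
  constructor
  · nlinarith [sq_nonneg ‖y - p‖]
  · intro hle
    rw [← sub_eq_zero, ← norm_eq_zero]
    nlinarith [norm_nonneg (y - p)]

theorem neg_norm_sq_le_two_mul_inner_of_dist_le {u z p : E} {t : ℝ}
    (h : dist z (z - t • u) ≤ dist p (z - t • u)) : -‖p - z‖ ^ 2 ≤ 2 * t * ⟪u, p - z⟫ := by
  have hsq := pow_le_pow_left₀ dist_nonneg h 2
  rw [dist_eq_norm, dist_eq_norm, sub_sub_cancel, show p - (z - t • u) = (p - z) + t • u by abel,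
    norm_add_sq_real, real_inner_smul_right, real_inner_comm] at hsq
  nlinarith [sq_nonneg ‖p - z‖]

variable [CompleteSpace E]

theorem IsCompact.exists_mem_exposedPoints_lt_apply (hK : IsCompact K) {z : E} (hz : z ∈ K)
    (l : StrongDual ℝ E) {r : ℝ} (hr : r < l z) : ∃ p ∈ K.exposedPoints ℝ, r < l p := by
  set u := (toDual ℝ E).symm l
  have hu : ∀ y, ⟪u, y⟫ = l y := fun y => toDual_symm_apply
  obtain ⟨R, hR⟩ := hK.isBounded.subset_closedBall z
  set t := R ^ 2 / (2 * (l z - r)) + 1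
  have ht : R ^ 2 < 2 * t * (l z - r) := by
    have : 0 < l z - r := sub_pos.mpr hr
    simp only [t]; field_simp; nlinarith
  obtain ⟨p, hpK, hpmax⟩ := hK.exists_isMaxOn ⟨z, hz⟩
    (continuous_id.dist continuous_const).continuousOn (f := fun y => dist y (z - t • u))
  refine ⟨p, mem_exposedPoints_of_isMaxOn_dist hpK hpmax, ?_⟩
  have hpz : ‖p - z‖ ^ 2 ≤ R ^ 2 := by
    have := hR hpK
    rw [mem_closedBall, dist_eq_norm] at this
    exact pow_le_pow_left₀ (norm_nonneg _) this 2
  have key := neg_norm_sq_le_two_mul_inner_of_dist_le (hpmax hz)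
  rw [inner_sub_right, hu, hu] at key
  nlinarith

theorem IsCompact.subset_closure_convexHull_exposedPoints (hK : IsCompact K) :
    K ⊆ closure (convexHull ℝ (K.exposedPoints ℝ)) := by
  intro z hz
  by_contra hzC
  obtain ⟨l, r, hlC, hrz⟩ :=
    geometric_hahn_banach_closed_point (convex_convexHull ℝ _).closure isClosed_closure hzC
  obtain ⟨p, hp, hrp⟩ := hK.exists_mem_exposedPoints_lt_apply hz l hrz
  exact (hlC p (subset_closure (subset_convexHull ℝ _ hp))).not_gt hrp

theorem IsCompact.closure_convexHull_exposedPoints (hK : IsCompact K) (hconv : Convex ℝ K) :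
    closure (convexHull ℝ (K.exposedPoints ℝ)) = K :=
  (closure_minimal (convexHull_min exposedPoints_subset hconv) hK.isClosed).antisymm
    hK.subset_closure_convexHull_exposedPoints

theorem straszewicz_closure_convexHull_exposedPoints_general (n : ℕ)
    (K : Set (EuclideanSpace ℝ (Fin n)))
    (hK : IsCompact K) (hconv : Convex ℝ K) :
    K = closure (convexHull ℝ (K.exposedPoints ℝ)) :=
  (hK.closure_convexHull_exposedPoints hconv).symm

/-- Straszewicz's theorem: a nonempty compact convex subset of ℝ^n equals the
closure of the convex hull of its exposed points. -/
theorem straszewicz_closure_convexHull_exposedPoints (n : ℕ)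
    (K : Set (EuclideanSpace ℝ (Fin n))) (hne : K.Nonempty)
    (hK : IsCompact K) (hconv : Convex ℝ K) :
    K = closure (convexHull ℝ (K.exposedPoints ℝ)) :=
  straszewicz_closure_convexHull_exposedPoints_general n K hK hconv
end

section
/- Every nonempty compact convex subset of ℝ^n has at least one exposed point. -/
/-!
A point of maximal norm in a compact set is exposed by the functional `⟪x, ·⟫`: for `y` in the
set, `⟪x, y⟫ ≤ ‖x‖ ‖y‖ ≤ ‖x‖²`, and equality forces `‖y - x‖² = ‖y‖² - 2⟪x, y⟫ + ‖x‖² ≤ 0`.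
-/

open RealInnerProductSpace

section InnerProductSpace

variable {E : Type*} [NormedAddCommGroup E] [InnerProductSpace ℝ E] {x y : E}

lemma real_inner_le_inner_self_of_norm_le (h : ‖y‖ ≤ ‖x‖) : ⟪x, y⟫ ≤ ⟪x, x⟫ :=
  calc ⟪x, y⟫ ≤ ‖x‖ * ‖y‖ := real_inner_le_norm x y
    _ ≤ ‖x‖ * ‖x‖ := by gcongr
    _ = ⟪x, x⟫ := (real_inner_self_eq_norm_mul_norm x).symm

lemma eq_of_norm_le_of_inner_self_le_inner (hnorm : ‖y‖ ≤ ‖x‖) (hinner : ⟪x, x⟫ ≤ ⟪x, y⟫) :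
    y = x := by
  have hsq : ‖y - x‖ ^ 2 ≤ 0 := by
    rw [norm_sub_sq_real, real_inner_comm]
    rw [real_inner_self_eq_norm_sq] at hinner
    nlinarith [norm_nonneg y]
  rwa [sq_nonpos_iff, norm_eq_zero, sub_eq_zero] at hsq

lemma mem_exposedPoints_of_isMaxOn_norm {A : Set E} (hx : x ∈ A) (hmax : IsMaxOn norm A x) :
    x ∈ A.exposedPoints ℝ :=
  ⟨hx, innerSL ℝ x, fun _ hy =>
    ⟨real_inner_le_inner_self_of_norm_le (hmax hy),
      eq_of_norm_le_of_inner_self_le_inner (hmax hy)⟩⟩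

lemma IsCompact.exposedPoints_nonempty {A : Set E} (hA : IsCompact A) (hne : A.Nonempty) :
    (A.exposedPoints ℝ).Nonempty :=
  let ⟨x, hx, hmax⟩ := hA.exists_isMaxOn hne continuous_norm.continuousOn
  ⟨x, mem_exposedPoints_of_isMaxOn_norm hx hmax⟩

end InnerProductSpace

/-- Every nonempty compact convex subset of ℝ^n has an exposed point. -/
theorem exposedPoints_nonempty (n : ℕ)
    (K : Set (EuclideanSpace ℝ (Fin n))) (hne : K.Nonempty)
    (hK : IsCompact K) :
    (K.exposedPoints ℝ).Nonempty :=
  hK.exposedPoints_nonempty hne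
end

section
/- Let M be a symmetric negative definite real n×n matrix with M_{ij} ≥ 0 for all i ≠ j, and let x ∈ ℝ^n be a vector such that (Mx)_i ≤ 0 for every i. Then x_i ≥ 0 for every i. -/
/-!
Write `x = x⁺ - x⁻`. Since `x⁻` and `x⁺` have disjoint supports and `M` is nonnegative off the
diagonal, `x⁻ ⬝ᵥ M *ᵥ x⁺ ≥ 0`, while `x⁻ ≥ 0` and `M *ᵥ x ≤ 0` give `x⁻ ⬝ᵥ M *ᵥ x ≤ 0`.
Subtracting, `x⁻ ⬝ᵥ M *ᵥ x⁻ ≥ 0`, so negative definiteness forces `x⁻ = 0`.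
-/

open Matrix

variable {ι R : Type*} [Fintype ι]

lemma negPart_mul_posPart_eq_zero [Ring R] [LinearOrder R] [IsOrderedRing R] (a : R) :
    a⁻ * a⁺ = 0 := by
  rcases le_total 0 a with ha | ha
  · simp [negPart_eq_zero.mpr ha]
  · simp [posPart_eq_zero.mpr ha]

lemma dotProduct_mulVec_nonneg_of_mul_eq_zero [CommSemiring R] [PartialOrder R]
    [IsOrderedRing R] {M : Matrix ι ι R} (hoff : ∀ i j, i ≠ j → 0 ≤ M i j) {u v : ι → R}
    (hu : 0 ≤ u) (hv : 0 ≤ v) (huv : ∀ i, u i * v i = 0) : 0 ≤ u ⬝ᵥ M *ᵥ v := by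
  refine Finset.sum_nonneg fun i _ => ?_
  rw [mulVec, dotProduct, Finset.mul_sum]
  refine Finset.sum_nonneg fun j _ => ?_
  rcases eq_or_ne i j with rfl | hij
  · rw [mul_left_comm, huv, mul_zero]
  · exact mul_nonneg (hu i) (mul_nonneg (hoff i j hij) (hv j))

lemma dotProduct_mulVec_negPart_self_nonneg [CommRing R] [LinearOrder R] [IsOrderedRing R]
    {M : Matrix ι ι R} (hoff : ∀ i j, i ≠ j → 0 ≤ M i j) {x : ι → R} (hx : M *ᵥ x ≤ 0) :
    0 ≤ x⁻ ⬝ᵥ M *ᵥ x⁻ := by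
  have hcross : 0 ≤ x⁻ ⬝ᵥ M *ᵥ x⁺ :=
    dotProduct_mulVec_nonneg_of_mul_eq_zero hoff (negPart_nonneg x) (posPart_nonneg x)
      fun i => negPart_mul_posPart_eq_zero (x i)
  have hnonpos : x⁻ ⬝ᵥ M *ᵥ x ≤ 0 := by
    simpa using dotProduct_nonneg_of_nonneg (negPart_nonneg x) (neg_nonneg.mpr hx)
  have hsplit : x⁻ ⬝ᵥ M *ᵥ x = x⁻ ⬝ᵥ M *ᵥ x⁺ - x⁻ ⬝ᵥ M *ᵥ x⁻ := by
    rw [← dotProduct_sub, ← mulVec_sub, posPart_sub_negPart]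
  rw [hsplit, sub_nonpos] at hnonpos
  exact hcross.trans hnonpos

theorem negativity_lemma_general (n : ℕ) (M : Matrix (Fin n) (Fin n) ℝ)
    (hneg : ∀ y : Fin n → ℝ, y ≠ 0 → dotProduct y (M.mulVec y) < 0)
    (hoff : ∀ i j, i ≠ j → 0 ≤ M i j)
    (x : Fin n → ℝ) (hx : ∀ i, M.mulVec x i ≤ 0) :
    ∀ i, 0 ≤ x i := by
  have hxneg : x⁻ = 0 := by
    by_contra h
    exact (hneg _ h).not_ge (dotProduct_mulVec_negPart_self_nonneg hoff hx)
  exact negPart_eq_zero.mp hxneg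

/-- Negativity lemma, linear algebra form: if `M` is symmetric negative definite
with nonnegative off-diagonal entries and `M x ≤ 0` componentwise, then `x ≥ 0`. -/
theorem negativity_lemma (n : ℕ) (M : Matrix (Fin n) (Fin n) ℝ)
    (hsymm : M.IsSymm)
    (hneg : ∀ y : Fin n → ℝ, y ≠ 0 → dotProduct y (M.mulVec y) < 0)
    (hoff : ∀ i j, i ≠ j → 0 ≤ M i j)
    (x : Fin n → ℝ) (hx : ∀ i, M.mulVec x i ≤ 0) :
    ∀ i, 0 ≤ x i :=
  negativity_lemma_general n M hneg hoff x hx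
end
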